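/- arXiv:2012.10985 — 4 statements merged into one kernel-verified Lean document; each statement's English description precedes it below -/
import Mathlib

section
/- Let a_1,...,a_n ∈ ℝ^n, fix indices i ≠ j, and let a_new = (a_i + a_j)/2. Let v be a nonzero vector orthogonal to a_k for all k ≠ i,j (hence v·a_new = 0 implies v·a_i = -(v·a_j)). Suppose b = ∑ c_k a_k with all c_k ≥ 0, ∑ c_k = 1, and b·v > 0 with a_i·v > 0. Then c_i ≥ c_j, and b lies in the convex hull of the points obtained from a_1,...,a_n by replacing a_j with a_new. -/
/-!
Since `v` kills every `a k` with `k ≠ i, j` and `⟪a j, v⟫ = -⟪a i, v⟫`, pairing `b` with `v`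
gives `⟪b, v⟫ = (c i - c j) ⟪a i, v⟫`, so both positivity assumptions force `c j ≤ c i`.
Then `c i • a i + c j • a j = (c i - c j) • a i + (2 c j) • a_new` rewrites `b` as a convex
combination of the new vertices with the nonnegative weights `c i - c j` and `2 c j`.
-/

open Finset Function
open scoped RealInnerProductSpace

variable {ι : Type*}

theorem Fintype.sum_eq_sum_of_eq_off_pair [Fintype ι] [DecidableEq ι] {M : Type*}
    [AddCommMonoid M] {f g : ι → M} {i j : ι} (hij : i ≠ j) (hpair : f i + f j = g i + g j)
    (hoff : ∀ k, k ≠ i → k ≠ j → f k = g k) : ∑ k, f k = ∑ k, g k := by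
  rw [← sum_add_sum_compl {i, j} f, ← sum_add_sum_compl {i, j} g, sum_pair hij, sum_pair hij,
    hpair]
  refine congrArg _ (Finset.sum_congr rfl fun k hk => ?_)
  simp only [mem_compl, mem_insert, mem_singleton, not_or] at hk
  exact hoff k hk.1 hk.2

section Inner

variable [Fintype ι] {F : Type*} [NormedAddCommGroup F] [InnerProductSpace ℝ F]

theorem inner_sum_smul_of_orthogonal_off_pair (a : ι → F) (c : ι → ℝ) {i j : ι} (hij : i ≠ j)
    {v : F} (horth : ∀ k, k ≠ i → k ≠ j → ⟪v, a k⟫ = 0)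
    (hmid : ⟪v, (2 : ℝ)⁻¹ • (a i + a j)⟫ = 0) :
    ⟪∑ k, c k • a k, v⟫ = (c i - c j) * ⟪a i, v⟫ := by
  have haj : ⟪a j, v⟫ = -⟪a i, v⟫ := by
    rw [inner_smul_right, inner_add_right, mul_eq_zero] at hmid
    rw [real_inner_comm v (a j), real_inner_comm v (a i)]
    linarith [hmid.resolve_left (by norm_num)]
  rw [sum_inner, Fintype.sum_eq_add i j hij fun k hk => by
    rw [real_inner_smul_left, real_inner_comm, horth k hk.1 hk.2, mul_zero]]
  rw [real_inner_smul_left, real_inner_smul_left, haj]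
  ring

theorem le_of_inner_sum_smul_pos (a : ι → F) (c : ι → ℝ) {i j : ι} (hij : i ≠ j) {v : F}
    (horth : ∀ k, k ≠ i → k ≠ j → ⟪v, a k⟫ = 0) (hmid : ⟪v, (2 : ℝ)⁻¹ • (a i + a j)⟫ = 0)
    (hpos : 0 < ⟪∑ k, c k • a k, v⟫) (hav : 0 < ⟪a i, v⟫) : c j ≤ c i := by
  rw [inner_sum_smul_of_orthogonal_off_pair a c hij horth hmid] at hpos
  exact sub_nonneg.mp (pos_of_mul_pos_left hpos hav.le).le

end Inner

section Midpoint

variable [DecidableEq ι] {E : Type*} [AddCommGroup E] [Module ℝ E]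

/-- Weights of `∑ c k • a k` after `a j` is replaced by the midpoint of `a i` and `a j`. -/
def midpointWeights (c : ι → ℝ) (i j : ι) : ι → ℝ :=
  update (update c i (c i - c j)) j (2 * c j)

variable {c : ι → ℝ} {i j : ι}

theorem midpointWeights_nonneg (hc : ∀ k, 0 ≤ c k) (hji : c j ≤ c i) (k : ι) :
    0 ≤ midpointWeights c i j k := by
  unfold midpointWeights
  rcases eq_or_ne k j with rfl | hkj
  · simpa using hc k
  rcases eq_or_ne k i with rfl | hki
  · simpa [hkj] using hji
  · simpa [hkj, hki] using hc k

theorem sum_midpointWeights [Fintype ι] (hij : i ≠ j) :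
    ∑ k, midpointWeights c i j k = ∑ k, c k := by
  refine Fintype.sum_eq_sum_of_eq_off_pair hij ?_ fun k hki hkj => ?_
  · simp only [midpointWeights, update_self, update_of_ne hij]
    ring
  · simp [midpointWeights, update_of_ne, hki, hkj]

theorem sum_midpointWeights_smul_update [Fintype ι] (a : ι → E) (hij : i ≠ j) :
    ∑ k, midpointWeights c i j k • update a j ((2 : ℝ)⁻¹ • (a i + a j)) k =
      ∑ k, c k • a k := by
  refine Fintype.sum_eq_sum_of_eq_off_pair hij ?_ fun k hki hkj => ?_
  · simp only [midpointWeights, update_self, update_of_ne hij]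
    module
  · simp [midpointWeights, update_of_ne, hki, hkj]

end Midpoint

theorem stmt_1_general (n : ℕ) (a : Fin n → EuclideanSpace ℝ (Fin n))
    (i j : Fin n) (hij : i ≠ j)
    (v : EuclideanSpace ℝ (Fin n))
    (horth : ∀ k, k ≠ i → k ≠ j → (inner ℝ v (a k) : ℝ) = 0)
    (hnew : (inner ℝ v ((2 : ℝ)⁻¹ • (a i + a j)) : ℝ) = 0)
    (c : Fin n → ℝ) (hc0 : ∀ k, 0 ≤ c k) (hc1 : ∑ k, c k = 1)
    (b : EuclideanSpace ℝ (Fin n)) (hb : b = ∑ k, c k • a k)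
    (hbv : (0 : ℝ) < inner ℝ b v) (hav : (0 : ℝ) < inner ℝ (a i) v) :
    c j ≤ c i ∧
      ∃ d : Fin n → ℝ, (∀ k, 0 ≤ d k) ∧ ∑ k, d k = 1 ∧
        b = ∑ k, d k • (Function.update a j ((2 : ℝ)⁻¹ • (a i + a j)) k) := by
  subst hb
  have hji : c j ≤ c i := le_of_inner_sum_smul_pos a c hij horth hnew hbv hav
  exact ⟨hji, midpointWeights c i j, midpointWeights_nonneg hc0 hji,
    (sum_midpointWeights hij).trans hc1, (sum_midpointWeights_smul_update a hij).symm⟩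

/-- consistency step of the bisection. If `v` is orthogonal to all
`a k` for `k ≠ i, j` and to the midpoint `a_new = (a i + a j)/2`, and
`b = ∑ c k • a k` is a convex combination with `⟪b, v⟫ > 0` and `⟪a i, v⟫ > 0`,
then `c j ≤ c i` and `b` lies in the convex hull of the vertices obtained by
replacing `a j` with `a_new`. -/
theorem stmt_1 (n : ℕ) (a : Fin n → EuclideanSpace ℝ (Fin n))
    (i j : Fin n) (hij : i ≠ j)
    (v : EuclideanSpace ℝ (Fin n)) (hv : v ≠ 0)
    (horth : ∀ k, k ≠ i → k ≠ j → (inner ℝ v (a k) : ℝ) = 0)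
    (hnew : (inner ℝ v ((2 : ℝ)⁻¹ • (a i + a j)) : ℝ) = 0)
    (c : Fin n → ℝ) (hc0 : ∀ k, 0 ≤ c k) (hc1 : ∑ k, c k = 1)
    (b : EuclideanSpace ℝ (Fin n)) (hb : b = ∑ k, c k • a k)
    (hbv : (0 : ℝ) < inner ℝ b v) (hav : (0 : ℝ) < inner ℝ (a i) v) :
    c j ≤ c i ∧
      ∃ d : Fin n → ℝ, (∀ k, 0 ≤ d k) ∧ ∑ k, d k = 1 ∧
        b = ∑ k, d k • (Function.update a j ((2 : ℝ)⁻¹ • (a i + a j)) k) :=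
  stmt_1_general n a i j hij v horth hnew c hc0 hc1 b hb hbv hav
end

section
/- Let S ⊆ ℝ^n be a set with diameter at most δ contained in {x : ‖x‖₁ = 1}, where δ√n ≤ 1/2. Then for every w, u ∈ S, the angle between w and u is at most 2δ√n. -/
/-!
By the law of cosines, `‖w - u‖² ≥ 2‖w‖‖u‖(1 - cos θ) = 4‖w‖‖u‖ sin²(θ/2)`, and Jordan's
inequality `sin (θ/2) ≥ θ/π` turns this into `θ ≤ (π/2) ‖w - u‖ / √(‖w‖‖u‖)`. On the `ℓ¹` unit
sphere, Cauchy–Schwarz gives `‖x‖² ≥ 1/n`, so `θ ≤ (π/2) δ √n ≤ 2δ√n`.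
-/
open Real InnerProductGeometry

namespace EuclideanSpace

variable {𝕜 ι : Type*} [RCLike 𝕜] [Fintype ι]

theorem norm_le_sum_norm (x : EuclideanSpace 𝕜 ι) : ‖x‖ ≤ ∑ i, ‖x i‖ := by
  have h : ‖x‖ ^ 2 ≤ (∑ i, ‖x i‖) ^ 2 := by
    rw [norm_sq_eq]
    exact Finset.sum_sq_le_sq_sum_of_nonneg fun i _ => norm_nonneg _
  exact (pow_le_pow_iff_left₀ (norm_nonneg _) (by positivity) two_ne_zero).1 h

theorem sq_sum_norm_le_card_mul_norm_sq (x : EuclideanSpace 𝕜 ι) :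
    (∑ i, ‖x i‖) ^ 2 ≤ Fintype.card ι * ‖x‖ ^ 2 := by
  rw [norm_sq_eq, ← Finset.card_univ]
  exact sq_sum_le_card_mul_sum_sq

end EuclideanSpace

namespace InnerProductGeometry

variable {V : Type*} [NormedAddCommGroup V] [InnerProductSpace ℝ V]

theorem four_mul_norm_mul_norm_mul_angle_sq_le (x y : V) :
    4 * (‖x‖ * ‖y‖) * angle x y ^ 2 ≤ π ^ 2 * ‖x - y‖ ^ 2 := by
  set θ := angle x y
  have hθ : 0 ≤ θ := angle_nonneg x y
  have hsin : θ / π ≤ sin (θ / 2) := by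
    have := mul_le_sin (x := θ / 2) (by positivity) (by linarith [angle_le_pi x y])
    rwa [div_mul_div_comm, mul_comm 2 θ, mul_div_mul_right _ _ two_ne_zero] at this
  have hcos : cos θ = 1 - 2 * sin (θ / 2) ^ 2 := by
    rw [← cos_two_mul_eq_one_sub, mul_div_cancel₀ _ two_ne_zero]
  have hlaw := norm_sub_sq_eq_norm_sq_add_norm_sq_sub_two_mul_norm_mul_norm_mul_cos_angle x y
  have hab : 0 ≤ ‖x‖ * ‖y‖ := by positivity
  have hsin_sq : (θ / π) ^ 2 ≤ sin (θ / 2) ^ 2 := pow_le_pow_left₀ (by positivity) hsin 2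
  have hπ : (θ / π) ^ 2 * π ^ 2 = θ ^ 2 := by field_simp
  calc 4 * (‖x‖ * ‖y‖) * θ ^ 2 = π ^ 2 * (4 * (‖x‖ * ‖y‖) * (θ / π) ^ 2) := by rw [← hπ]; ring
    _ ≤ π ^ 2 * (4 * (‖x‖ * ‖y‖) * sin (θ / 2) ^ 2) := by gcongr
    _ ≤ π ^ 2 * ‖x - y‖ ^ 2 := by
      gcongr
      nlinarith [sq_nonneg (‖x‖ - ‖y‖)]

theorem angle_le_two_mul_mul_sqrt {x y : V} {c δ : ℝ} (hc : 1 ≤ c * (‖x‖ * ‖y‖))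
    (hxy : ‖x - y‖ ≤ δ) : angle x y ≤ 2 * δ * √c := by
  have hc0 : 0 ≤ c := by
    by_contra! h
    nlinarith [mul_nonneg (norm_nonneg x) (norm_nonneg y)]
  have hδ : 0 ≤ δ := (norm_nonneg _).trans hxy
  have hsq : angle x y ^ 2 ≤ (2 * δ * √c) ^ 2 := by
    rw [mul_pow, sq_sqrt hc0]
    calc angle x y ^ 2 ≤ c * (4 * (‖x‖ * ‖y‖) * angle x y ^ 2) / 4 := by
          nlinarith [sq_nonneg (angle x y)]
      _ ≤ c * (π ^ 2 * ‖x - y‖ ^ 2) / 4 := by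
          gcongr c * ?_ / 4
          exact four_mul_norm_mul_norm_mul_angle_sq_le x y
      _ ≤ c * (4 ^ 2 * δ ^ 2) / 4 := by gcongr; exact pi_le_four
      _ = (2 * δ) ^ 2 * c := by ring
  exact (pow_le_pow_iff_left₀ (angle_nonneg x y) (by positivity) two_ne_zero).1 hsq

end InnerProductGeometry

theorem stmt_7_general (n : ℕ) (S : Set (EuclideanSpace ℝ (Fin n))) (δ : ℝ)
    (hdiam : Metric.diam S ≤ δ)
    (hS : ∀ x ∈ S, ∑ i, |x i| = 1)
    (w u : EuclideanSpace ℝ (Fin n)) (hwS : w ∈ S) (huS : u ∈ S) :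
    Real.arccos ((inner ℝ w u : ℝ) / (‖w‖ * ‖u‖)) ≤ 2 * δ * Real.sqrt n := by
  simp only [← Real.norm_eq_abs] at hS
  -- `Metric.diam` is `0` on unbounded sets, so boundedness is what makes `hdiam` informative.
  have hbdd : Bornology.IsBounded S := (Metric.isBounded_closedBall (x := 0) (r := 1)).subset
    fun x hx => by simpa [← hS x hx] using EuclideanSpace.norm_le_sum_norm x
  have hdist : ‖w - u‖ ≤ δ := by
    rw [← dist_eq_norm]
    exact (Metric.dist_le_diam_of_mem hbdd hwS huS).trans hdiam
  have hlow : ∀ x ∈ S, 1 ≤ n * ‖x‖ ^ 2 := fun x hx => by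
    have h := EuclideanSpace.sq_sum_norm_le_card_mul_norm_sq x
    rwa [hS x hx, one_pow, Fintype.card_fin] at h
  have hprod : 1 ≤ n * (‖w‖ * ‖u‖) := by
    have h := mul_le_mul (hlow w hwS) (hlow u huS) zero_le_one (by positivity)
    rw [one_mul, show n * ‖w‖ ^ 2 * (n * ‖u‖ ^ 2) = (n * (‖w‖ * ‖u‖)) ^ 2 by ring] at h
    exact (one_le_sq_iff₀ (by positivity)).1 h
  exact angle_le_two_mul_mul_sqrt hprod hdist

/-- max angle lemma: if `S` is a subset of the L1 unit sphere of
Euclidean diameter at most `δ` with `δ√n ≤ 1/2`, then any two points of `S`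
make an angle at most `2δ√n`. -/
theorem stmt_7 (n : ℕ) (S : Set (EuclideanSpace ℝ (Fin n))) (δ : ℝ)
    (hdiam : Metric.diam S ≤ δ)
    (hS : ∀ x ∈ S, ∑ i, |x i| = 1)
    (hδ : δ * Real.sqrt n ≤ 1 / 2)
    (w u : EuclideanSpace ℝ (Fin n)) (hwS : w ∈ S) (huS : u ∈ S) :
    Real.arccos ((inner ℝ w u : ℝ) / (‖w‖ * ‖u‖)) ≤ 2 * δ * Real.sqrt n :=
  stmt_7_general n S δ hdiam hS w u hwS huS
end

section
/- Let a_1,...,a_n ∈ ℝ^n, i ≠ j, and a_new = (a_i + a_j)/2. Then the convex hull of {a_k : k ≠ j} ∪ {a_new} and the convex hull of {a_k : k ≠ i} ∪ {a_new} together cover the convex hull of {a_1,...,a_n}, i.e., their union equals it. -/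
/-!
The midpoint `m` splits the edge `[a i, a j]` into `[a i, m] ∪ [m, a j]`. Since `m` already lies
in the hull, the hull of all vertices is the join of that edge with the hull of `m` and the
remaining vertices, and joins distribute over unions of their first argument.
-/

open Set

section

variable {𝕜 E : Type*} [Field 𝕜] [LinearOrder 𝕜] [IsStrictOrderedRing 𝕜] [AddCommGroup E]
  [Module 𝕜 E] {x y m : E}

theorem segment_eq_union_segment_of_mem (hm : m ∈ segment 𝕜 x y) :
    segment 𝕜 x y = segment 𝕜 x m ∪ segment 𝕜 m y := by
  obtain ⟨t, ⟨ht₀, ht₁⟩, rfl⟩ := segment_eq_image_lineMap 𝕜 x y ▸ hm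
  set f : 𝕜 →ᵃ[𝕜] E := AffineMap.lineMap x y
  calc segment 𝕜 x y = f '' segment 𝕜 0 1 := by
        rw [image_segment, AffineMap.lineMap_apply_zero, AffineMap.lineMap_apply_one]
    _ = f '' (segment 𝕜 0 t ∪ segment 𝕜 t 1) := by
        rw [segment_eq_Icc zero_le_one, segment_eq_Icc ht₀, segment_eq_Icc ht₁,
          Icc_union_Icc_eq_Icc ht₀ ht₁]
    _ = segment 𝕜 x (f t) ∪ segment 𝕜 (f t) y := by
        rw [image_union, image_segment, image_segment, AffineMap.lineMap_apply_zero,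
          AffineMap.lineMap_apply_one]

theorem convexHull_insert_insert_eq_union (s : Set E) (hm : m ∈ segment 𝕜 x y) :
    convexHull 𝕜 (insert x (insert y s)) =
      convexHull 𝕜 (insert m (insert x s)) ∪ convexHull 𝕜 (insert m (insert y s)) := by
  have join_segment (p q : E) : convexHull 𝕜 (insert p (insert q (insert m s))) =
      convexJoin 𝕜 (segment 𝕜 p q) (convexHull 𝕜 (insert m s)) := by
    rw [← convexHull_pair, ← convexHull_union (insert_nonempty _ _) (insert_nonempty _ _),
      insert_union, singleton_union]
  have hm' : m ∈ convexHull 𝕜 (insert x (insert y s)) :=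
    segment_subset_convexHull (mem_insert x _) (mem_insert_of_mem x (mem_insert y s)) hm
  apply subset_antisymm
  · calc convexHull 𝕜 (insert x (insert y s))
        ⊆ convexHull 𝕜 (insert x (insert y (insert m s))) := by
          gcongr; exact subset_insert m s
      _ = convexJoin 𝕜 (segment 𝕜 x m ∪ segment 𝕜 m y) (convexHull 𝕜 (insert m s)) := by
          rw [join_segment, segment_eq_union_segment_of_mem hm]
      _ = convexHull 𝕜 (insert m (insert x s)) ∪ convexHull 𝕜 (insert m (insert y s)) := by
          rw [convexJoin_union_left, ← join_segment, ← join_segment, insert_idem, insert_comm y m,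
            insert_idem, insert_comm x m]
  · refine union_subset (convexHull_min ?_ (convex_convexHull 𝕜 _))
      (convexHull_min ?_ (convex_convexHull 𝕜 _))
    · exact insert_subset hm' <| insert_subset (subset_convexHull 𝕜 _ (mem_insert x _))
        ((subset_insert y s).trans (subset_insert x _) |>.trans (subset_convexHull 𝕜 _))
    · exact insert_subset hm' ((subset_insert x _).trans (subset_convexHull 𝕜 _))

end

theorem image_setOf_ne_eq_insert {ι α : Type*} (a : ι → α) {i j : ι} (hij : i ≠ j) :
    a '' {k | k ≠ j} = insert (a i) (a '' {k | k ≠ i ∧ k ≠ j}) := by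
  ext x
  constructor
  · rintro ⟨k, hk, rfl⟩
    by_cases hki : k = i
    · simp [hki]
    · exact mem_insert_of_mem _ ⟨k, ⟨hki, hk⟩, rfl⟩
  · rintro (rfl | ⟨k, hk, rfl⟩)
    exacts [⟨i, hij, rfl⟩, ⟨k, hk.2, rfl⟩]

/-- bisecting through the midpoint of the edge `a i – a j` covers
the convex hull: the union of the two sub-hulls equals the hull of all vertices. -/
theorem stmt_14 (n : ℕ) (a : Fin n → EuclideanSpace ℝ (Fin n)) (i j : Fin n)
    (hij : i ≠ j) :
    convexHull ℝ ((a '' {k | k ≠ j}) ∪ {(2 : ℝ)⁻¹ • (a i + a j)}) ∪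
      convexHull ℝ ((a '' {k | k ≠ i}) ∪ {(2 : ℝ)⁻¹ • (a i + a j)}) =
    convexHull ℝ (Set.range a) := by
  set m := (2 : ℝ)⁻¹ • (a i + a j)
  set T := a '' {k | k ≠ i ∧ k ≠ j}
  have hm : m ∈ segment ℝ (a i) (a j) := by
    simpa only [midpoint_eq_smul_add, invOf_eq_inv] using
      midpoint_mem_segment (𝕜 := ℝ) (a i) (a j)
  have hT : a '' {k | k ≠ j ∧ k ≠ i} = T := by simp_rw [T, and_comm]
  have hrange : range a = insert (a i) (insert (a j) T) := by
    rw [← insert_image_compl_eq_range a j, compl_singleton_eq, image_setOf_ne_eq_insert a hij,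
      insert_comm]
  rw [image_setOf_ne_eq_insert a hij, image_setOf_ne_eq_insert a hij.symm, hT, hrange,
    union_singleton, union_singleton, convexHull_insert_insert_eq_union T hm]
end

section
/- Let S be an n-simplex in ℝ^n and bisect it through the midpoint of a longest edge, obtaining two sub-simplices. Each new edge (from a remaining vertex to the midpoint) has length at most (√3/2) times the diameter of S. -/
open EuclideanGeometry

section

variable {V P : Type*} [NormedAddCommGroup V] [InnerProductSpace ℝ V] [MetricSpace P]
  [NormedAddTorsor V P]

/-- By Apollonius, `|cm|² = (|ca|² + |cb|²)/2 - |ab|²/4`, which is at most `(3/4)|ab|²`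
when `ab` is at least as long as `ca` and `cb`. -/
theorem dist_midpoint_sq_le_of_dist_le {a b c : P} (hca : dist c a ≤ dist a b)
    (hcb : dist c b ≤ dist a b) :
    dist c (midpoint ℝ a b) ^ 2 ≤ 3 / 4 * dist a b ^ 2 := by
  have apollonius := dist_sq_add_dist_sq_eq_two_mul_dist_midpoint_sq_add_half_dist_sq c a b
  have hca2 : dist c a ^ 2 ≤ dist a b ^ 2 := pow_le_pow_left₀ dist_nonneg hca 2
  have hcb2 : dist c b ^ 2 ≤ dist a b ^ 2 := pow_le_pow_left₀ dist_nonneg hcb 2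
  linarith

theorem dist_midpoint_le_sqrt_three_div_two_mul {a b c : P} (hca : dist c a ≤ dist a b)
    (hcb : dist c b ≤ dist a b) :
    dist c (midpoint ℝ a b) ≤ √3 / 2 * dist a b := by
  refine le_of_sq_le_sq ?_ (by positivity)
  calc dist c (midpoint ℝ a b) ^ 2 ≤ 3 / 4 * dist a b ^ 2 :=
        dist_midpoint_sq_le_of_dist_le hca hcb
    _ = (√3 / 2 * dist a b) ^ 2 := by
        rw [mul_pow, div_pow, Real.sq_sqrt (by norm_num : (0 : ℝ) ≤ 3)]
        norm_num

end

theorem stmt_15_general (n : ℕ) (v : Fin (n + 1) → EuclideanSpace ℝ (Fin n))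
    (i j : Fin (n + 1))
    (hlongest : ∀ k l, dist (v k) (v l) ≤ dist (v i) (v j)) :
    ∀ k, dist (v k) (midpoint ℝ (v i) (v j)) ≤
      (Real.sqrt 3 / 2) * dist (v i) (v j) := fun k =>
  dist_midpoint_le_sqrt_three_div_two_mul (hlongest k i) (hlongest k j)

/-- bisecting an `n`-simplex through the midpoint of a longest edge,
each new edge (from a remaining vertex to the midpoint) has length at most
`√3/2` times the diameter (= longest edge length) of the simplex. -/
theorem stmt_15 (n : ℕ) (v : Fin (n + 1) → EuclideanSpace ℝ (Fin n))
    (hindep : AffineIndependent ℝ v) (i j : Fin (n + 1)) (hij : i ≠ j)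
    (hlongest : ∀ k l, dist (v k) (v l) ≤ dist (v i) (v j)) :
    ∀ k, dist (v k) (midpoint ℝ (v i) (v j)) ≤
      (Real.sqrt 3 / 2) * dist (v i) (v j) :=
  stmt_15_general n v i j hlongest
end
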